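/- Let f : ℝ → ℝ be continuously differentiable on [0,T] and let t ∈ (0,T]. Then the Atangana–Baleanu fractional derivative of order α of f at t tends to f(t) − f(0) as α → 0⁺; that is, lim_{α → 0⁺} D_*^α f(t) = f(t) − f(0). -/

import Mathlib

open Set Filter

/-- Two-parameter Mittag-Leffler function `E_{α,β}(z) = ∑ₖ zᵏ / Γ(αk + β)`. -/
noncomputable def mittagLeffler (α β z : ℝ) : ℝ :=
  ∑' k : ℕ, z ^ k / Real.Gamma (α * k + β)

/-- Atangana–Baleanu fractional derivative of order `α` with base point `0`
(normalization `M(α) = 1`). -/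
noncomputable def abDeriv (α : ℝ) (f : ℝ → ℝ) (t : ℝ) : ℝ :=
  (1 / (1 - α)) * ∫ s in (0:ℝ)..t, deriv f s *
    mittagLeffler α 1 (-α * (t - s) ^ α / (1 - α))

/-!
Since `Γ ≥ 1/2` on `[1, ∞)`, the Mittag-Leffler series gives `|E_{α,1}(z) - 1| ≤ 4|z|` for
`|z| ≤ 1/2`, uniformly in `α ≥ 0`. The kernel argument `-α (t - s)^α / (1 - α)` tends to `0`
uniformly in `s ∈ [0, t]` as `α → 0⁺`, so the kernel tends uniformly to `1`, and by dominated
convergence the integral tends to `∫₀ᵗ f' = f t - f 0`, while the prefactor `1 / (1 - α)` tends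
to `1`.
-/

open MeasureTheory Topology Interval

lemma Real.half_le_Gamma {x : ℝ} (hx : 1 ≤ x) : 1 / 2 ≤ Real.Gamma x := by
  have hx₀ : 0 < x := by linarith
  have hmono := Real.Gamma_strictMonoOn_Ici.monotoneOn (a := 2) (mem_Ici.2 le_rfl)
  rcases le_total 2 x with h2 | h2
  · linarith [hmono h2 h2, Real.Gamma_two]
  · have h : 1 ≤ x * Real.Gamma x := calc
      1 = Real.Gamma 2 := Real.Gamma_two.symm
      _ ≤ Real.Gamma (x + 1) := hmono (by rw [mem_Ici]; linarith) (by linarith)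
      _ = x * Real.Gamma x := Real.Gamma_add_one hx₀.ne'
    nlinarith [Real.Gamma_pos_of_pos hx₀]

lemma Real.rpow_le_max_one_self {x p : ℝ} (hx : 0 ≤ x) (hp₀ : 0 ≤ p) (hp₁ : p ≤ 1) :
    x ^ p ≤ max 1 x := by
  rcases le_total x 1 with h | h
  · exact (Real.rpow_le_one hx h hp₀).trans (le_max_left _ _)
  · calc x ^ p ≤ x ^ (1 : ℝ) := Real.rpow_le_rpow_of_exponent_le h hp₁
      _ = x := Real.rpow_one x
      _ ≤ max 1 x := le_max_right _ _

section MittagLeffler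

variable {α β : ℝ}

lemma norm_mittagLeffler_term_le (hα : 0 ≤ α) (hβ : 1 ≤ β) (z : ℝ) (k : ℕ) :
    ‖z ^ k / Real.Gamma (α * k + β)‖ ≤ 2 * |z| ^ k := by
  have hΓ := Real.half_le_Gamma (x := α * k + β) (by nlinarith [k.cast_nonneg (α := ℝ)])
  rw [norm_div, norm_pow, Real.norm_eq_abs, Real.norm_of_nonneg (by linarith),
    div_le_iff₀ (by linarith)]
  nlinarith [pow_nonneg (abs_nonneg z) k]

lemma abs_mittagLeffler_sub_one_le {z : ℝ} (hα : 0 ≤ α) (hz : |z| ≤ 1 / 2) :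
    |mittagLeffler α 1 z - 1| ≤ 4 * |z| := by
  have hz₁ : |z| < 1 := by linarith
  have hsum : Summable fun k : ℕ => z ^ k / Real.Gamma (α * k + 1) :=
    .of_norm_bounded ((summable_geometric_of_lt_one (abs_nonneg z) hz₁).mul_left 2)
      (norm_mittagLeffler_term_le hα le_rfl z)
  have htail : HasSum (fun k : ℕ => 2 * |z| * |z| ^ k) (2 * |z| * (1 - |z|)⁻¹) :=
    (hasSum_geometric_of_lt_one (abs_nonneg z) hz₁).mul_left _
  rw [mittagLeffler, hsum.tsum_eq_zero_add]
  simp only [CharP.cast_eq_zero, mul_zero, zero_add, pow_zero, Real.Gamma_one, div_one,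
    add_sub_cancel_left]
  rw [← Real.norm_eq_abs]
  refine (tsum_of_norm_bounded htail fun k => ?_).trans ?_
  · exact (norm_mittagLeffler_term_le hα le_rfl z (k + 1)).trans_eq (by ring)
  · rw [mul_inv_le_iff₀ (by linarith)]
    nlinarith [abs_nonneg z]

lemma continuousOn_mittagLeffler (hα : 0 ≤ α) (hβ : 1 ≤ β) :
    ContinuousOn (mittagLeffler α β) (Metric.ball 0 1) := by
  intro z hz
  rw [mem_ball_zero_iff] at hz
  obtain ⟨r, hzr, hr⟩ := exists_between hz
  have hcont : ContinuousOn (mittagLeffler α β) (Metric.closedBall 0 r) :=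
    continuousOn_tsum (fun k => ((continuous_pow k).div_const _).continuousOn)
      ((summable_geometric_of_lt_one ((norm_nonneg z).trans hzr.le) hr).mul_left 2) fun k w hw => by
        rw [mem_closedBall_zero_iff, Real.norm_eq_abs] at hw
        exact (norm_mittagLeffler_term_le hα hβ w k).trans (by gcongr)
  exact (hcont.continuousAt
    (Metric.closedBall_mem_nhds_of_mem (mem_ball_zero_iff.2 hzr))).continuousWithinAt

lemma TendstoUniformlyOn.mittagLeffler_one {ι X : Type*} {l : Filter ι} {s : Set X}
    {α : ι → ℝ} {z : ι → X → ℝ} (hα : ∀ᶠ i in l, 0 ≤ α i) (hz : TendstoUniformlyOn z 0 l s) :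
    TendstoUniformlyOn (fun i x => mittagLeffler (α i) 1 (z i x)) 1 l s := by
  rw [Metric.tendstoUniformlyOn_iff] at hz ⊢
  intro ε hε
  filter_upwards [hα, hz (min (1 / 2) (ε / 8)) (by positivity)] with i hαi hzi x hx
  have hzx : |z i x| < min (1 / 2) (ε / 8) := by simpa [Real.dist_eq] using hzi x hx
  have hml := abs_mittagLeffler_sub_one_le hαi (hzx.le.trans (min_le_left _ _))
  rw [Pi.one_apply, dist_comm, Real.dist_eq]
  linarith [min_le_right (1 / 2 : ℝ) (ε / 8)]

end MittagLeffler

lemma tendsto_intervalIntegral_mul_of_tendstoUniformlyOn {ι : Type*} {l : Filter ι}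
    [l.IsCountablyGenerated] {μ : Measure ℝ} {a b : ℝ} {g : ℝ → ℝ} {h : ι → ℝ → ℝ}
    (hg : IntervalIntegrable g μ a b)
    (hh_meas : ∀ᶠ i in l, AEStronglyMeasurable (h i) (μ.restrict (Ι a b)))
    (hh : TendstoUniformlyOn h 1 l (Ι a b)) :
    Tendsto (fun i => ∫ x in a..b, g x * h i x ∂μ) l (𝓝 (∫ x in a..b, g x ∂μ)) := by
  have hlim : Tendsto (fun i => ∫ x in a..b, g x * h i x ∂μ) l (𝓝 (∫ x in a..b, g x * 1 ∂μ)) := by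
    refine intervalIntegral.tendsto_integral_filter_of_dominated_convergence (fun x => ‖g x‖ * 2)
      ?_ ?_ (hg.norm.mul_const 2) (ae_of_all _ fun x hx => (hh.tendsto_at hx).const_mul (g x))
    · filter_upwards [hh_meas] with i hi using hg.def'.aestronglyMeasurable.mul hi
    · filter_upwards [Metric.tendstoUniformlyOn_iff.1 hh 1 one_pos] with i hi
      refine ae_of_all _ fun x hx => ?_
      have hhx : |h i x - 1| < 1 := by simpa [Real.dist_eq, abs_sub_comm] using hi x hx
      rw [norm_mul, Real.norm_eq_abs (h i x)]
      gcongr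
      linarith [abs_sub_abs_le_abs_sub (h i x) 1, abs_one (α := ℝ)]
  simpa using hlim

lemma ContDiffOn.intervalIntegrable_deriv {f : ℝ → ℝ} {a b : ℝ}
    (hf : ContDiffOn ℝ 1 f (Icc a b)) (hab : a < b) : IntervalIntegrable (deriv f) volume a b := by
  have hcont : ContinuousOn (derivWithin f (Icc a b)) (Icc a b) :=
    hf.continuousOn_derivWithin (uniqueDiffOn_Icc hab) le_rfl
  rw [intervalIntegrable_iff_integrableOn_Ioo_of_le hab.le]
  exact (hcont.integrableOn_Icc.mono_set Ioo_subset_Icc_self).congr_fun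
    (fun x hx => derivWithin_of_mem_nhds (Icc_mem_nhds hx.1 hx.2)) measurableSet_Ioo

lemma ContDiffOn.integral_deriv_eq_sub {f : ℝ → ℝ} {a b : ℝ}
    (hf : ContDiffOn ℝ 1 f (Icc a b)) (hab : a < b) : ∫ x in a..b, deriv f x = f b - f a :=
  intervalIntegral.integral_eq_sub_of_hasDerivAt_of_le hab.le hf.continuousOn
    (fun x hx => (((hf.differentiableOn one_ne_zero) x (Ioo_subset_Icc_self hx)).differentiableAt
      (Icc_mem_nhds hx.1 hx.2)).hasDerivAt) (hf.intervalIntegrable_deriv hab)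

noncomputable def abKernel (α t s : ℝ) : ℝ :=
  mittagLeffler α 1 (-α * (t - s) ^ α / (1 - α))

section abKernel

variable (a t : ℝ)

lemma tendstoUniformlyOn_abKernel_arg :
    TendstoUniformlyOn (fun α s => -α * (t - s) ^ α / (1 - α)) 0 (𝓝[>] 0) (Icc a t) := by
  set K := max 1 (t - a)
  have hbound : Tendsto (fun α : ℝ => α * K / (1 - α)) (𝓝[>] 0) (𝓝 0) := by
    have : ContinuousAt (fun α : ℝ => α * K / (1 - α)) 0 :=
      (continuousAt_id.mul continuousAt_const).div (continuousAt_const.sub continuousAt_id)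
        (by norm_num)
    simpa using this.tendsto.mono_left nhdsWithin_le_nhds
  rw [Metric.tendstoUniformlyOn_iff]
  intro ε hε
  filter_upwards [Ioo_mem_nhdsGT one_pos, hbound.eventually (gt_mem_nhds hε)]
    with α ⟨hα₀, hα₁⟩ hαε s ⟨has, hst⟩
  have hpow : (t - s) ^ α ≤ K :=
    (Real.rpow_le_max_one_self (by linarith) hα₀.le hα₁.le).trans (max_le_max le_rfl (by linarith))
  rw [Pi.zero_apply, dist_zero_left, Real.norm_eq_abs, abs_div, abs_mul, abs_neg,
    abs_of_pos hα₀, abs_of_nonneg (Real.rpow_nonneg (by linarith) _), abs_of_pos (by linarith)]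
  calc α * (t - s) ^ α / (1 - α) ≤ α * K / (1 - α) := by gcongr
    _ < ε := hαε

lemma tendstoUniformlyOn_abKernel :
    TendstoUniformlyOn (fun α => abKernel α t) 1 (𝓝[>] 0) (Icc a t) :=
  TendstoUniformlyOn.mittagLeffler_one (eventually_mem_nhdsWithin.mono fun _ h => le_of_lt h)
    (tendstoUniformlyOn_abKernel_arg a t)

lemma eventually_continuousOn_abKernel :
    ∀ᶠ α in 𝓝[>] 0, ContinuousOn (abKernel α t) (Icc a t) := by
  filter_upwards [eventually_mem_nhdsWithin,
    Metric.tendstoUniformlyOn_iff.1 (tendstoUniformlyOn_abKernel_arg a t) 1 one_pos]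
    with α (hα : 0 < α) hball
  refine (continuousOn_mittagLeffler hα.le le_rfl).comp ?_ fun s hs => ?_
  · exact Continuous.continuousOn (by fun_prop (disch := exact hα.le))
  · simpa only [Pi.zero_apply, dist_zero_left, mem_ball_zero_iff] using hball s hs

end abKernel

theorem abDeriv_tendsto_of_alpha_to_zero_general (T : ℝ)
    (f : ℝ → ℝ) (hf : ContDiffOn ℝ 1 f (Icc 0 T)) (t : ℝ) (ht : t ∈ Ioc 0 T) :
    Tendsto (fun α => abDeriv α f t) (nhdsWithin 0 (Ioi 0))
      (nhds (f t - f 0)) := by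
  have hft : ContDiffOn ℝ 1 f (Icc 0 t) := hf.mono (Icc_subset_Icc_right ht.2)
  have hfactor : Tendsto (fun α : ℝ => 1 / (1 - α)) (𝓝[>] 0) (𝓝 1) := by
    have : ContinuousAt (fun α : ℝ => 1 / (1 - α)) 0 :=
      continuousAt_const.div (continuousAt_const.sub continuousAt_id) (by norm_num)
    simpa using this.tendsto.mono_left nhdsWithin_le_nhds
  have hintegral : Tendsto (fun α => ∫ s in (0:ℝ)..t, deriv f s * abKernel α t s) (𝓝[>] 0)
      (𝓝 (f t - f 0)) := by
    rw [← hft.integral_deriv_eq_sub ht.1]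
    refine tendsto_intervalIntegral_mul_of_tendstoUniformlyOn (hft.intervalIntegrable_deriv ht.1)
      ?_ ?_ <;> rw [uIoc_of_le ht.1.le]
    · filter_upwards [eventually_continuousOn_abKernel 0 t] with α hα
      exact (hα.mono Ioc_subset_Icc_self).aestronglyMeasurable measurableSet_Ioc
    · exact (tendstoUniformlyOn_abKernel 0 t).mono Ioc_subset_Icc_self
  rw [← one_mul (f t - f 0)]
  exact hfactor.mul hintegral

/-- As `α → 0⁺`, the Atangana–Baleanu fractional derivative of order `α` of `f`
at `t` tends to `f t - f 0`. -/
theorem abDeriv_tendsto_of_alpha_to_zero (T : ℝ) (hT : 0 < T)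
    (f : ℝ → ℝ) (hf : ContDiffOn ℝ 1 f (Icc 0 T)) (t : ℝ) (ht : t ∈ Ioc 0 T) :
    Tendsto (fun α => abDeriv α f t) (nhdsWithin 0 (Ioi 0))
      (nhds (f t - f 0)) :=
  abDeriv_tendsto_of_alpha_to_zero_general T f hf t ht
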